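/- arXiv:1803.05470 — 4 statements merged into one kernel-verified Lean document; each statement's English description precedes it below -/
import Mathlib

section
/- For every n ≥ 2, there exist n nonatomic value measures on the interval [0,1] and an entitlement vector t (positive reals summing to 1) such that every t-proportional division of the cake into intervals assigned to agents requires at least 2n−1 intervals in total, i.e., at least 2n−2 cuts. -/
open MeasureTheory Set

noncomputable section

/-- The piece of agent `i` in a division of a cake by `k+1` cut points into `k+1` intervals
(cuts `x`, interval `j` going from `x j` to `x (j+1)`), with `owner` assigning intervals. -/
def piece {n k : ℕ} (x : Fin (k + 2) → ℝ) (owner : Fin (k + 1) → Fin n) (i : Fin n) : Set ℝ :=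
  ⋃ (j : Fin (k + 1)) (_ : owner j = i), Set.Ioc (x j.castSucc) (x j.succ)

/-- `x` is a sequence of cut points dividing the cake `[0,1]`. -/
def IsDivision {k : ℕ} (x : Fin (k + 2) → ℝ) : Prop :=
  Monotone x ∧ x 0 = 0 ∧ x (Fin.last (k + 1)) = 1

/-!
Cut `[0,1]` into `2n - 1` equal slots. Agent `0` values the `n` even slots uniformly and is
entitled to more than `(n - 1)/n` of its value, so its piece meets every even slot in positive
measure; agent `i ≥ 1` values only the odd slot `2i - 1`, between the even slots `2i - 2` and
`2i`. An interval of agent `0` meeting two even slots would contain an odd slot and leave its agent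
nothing, so agent `0` needs `n` intervals, and each of the other `n - 1` agents at least one.
-/

open Function

open Finset in
theorem Finset.add_card_sub_one_le_card_of_fiber {α β : Type*} [Fintype α] [Fintype β]
    [DecidableEq β] (f : α → β) (b : β) {c : ℕ} (hb : c ≤ #{a | f a = b})
    (hf : ∀ b' ≠ b, ∃ a, f a = b') : c + (Fintype.card β - 1) ≤ Fintype.card α := by
  have hfiber : ∀ b' ∈ univ.erase b, 1 ≤ #{a | f a = b'} := fun b' hb' ↦ by
    obtain ⟨a, ha⟩ := hf b' (ne_of_mem_erase hb')
    exact card_pos.mpr ⟨a, by simpa using ha⟩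
  calc c + (Fintype.card β - 1) = c + ∑ _b' ∈ univ.erase b, 1 := by
        rw [sum_const, smul_eq_mul, mul_one, card_erase_of_mem (mem_univ b), card_univ]
    _ ≤ #{a | f a = b} + ∑ b' ∈ univ.erase b, #{a | f a = b'} :=
        add_le_add hb (sum_le_sum hfiber)
    _ = Fintype.card α := by
        rw [add_sum_erase _ (fun b' ↦ #{a | f a = b'}) (mem_univ b), ← card_univ,
          card_eq_sum_card_fiberwise (fun a _ ↦ mem_univ (f a))]

theorem MeasureTheory.measure_inter_ne_zero_of_measure_sdiff_lt {α : Type*} [MeasurableSpace α]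
    {μ : Measure α} {P E B : Set α} (h : μ (E \ B) < μ (P ∩ E)) : μ (P ∩ B) ≠ 0 := by
  intro h0
  refine h.not_ge ?_
  calc μ (P ∩ E) ≤ μ (E \ B ∪ P ∩ B) := measure_mono fun y ⟨hP, hE⟩ ↦ by
        by_cases hB : y ∈ B
        exacts [Or.inr ⟨hP, hB⟩, Or.inl ⟨hE, hB⟩]
    _ ≤ μ (E \ B) := by simpa [h0] using measure_union_le (μ := μ) (E \ B) (P ∩ B)

theorem lt_and_lt_of_volume_Ioc_inter_Icc_ne_zero {u v a b : ℝ}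
    (h : volume (Ioc u v ∩ Icc a b) ≠ 0) : u < b ∧ a < v := by
  have hsub : Ioc u v ∩ Icc a b ⊆ Icc (max u a) (min v b) := by
    rw [← Icc_inter_Icc]; exact inter_subset_inter_left _ Ioc_subset_Icc_self
  have hpos : max u a < min v b := by
    by_contra hle
    refine h (measure_mono_null hsub ?_)
    rw [Real.volume_Icc, ENNReal.ofReal_eq_zero]
    linarith [not_lt.mp hle]
  exact ⟨(le_max_left u a).trans_lt (hpos.trans_le (min_le_right v b)),
    (le_max_right u a).trans_lt (hpos.trans_le (min_le_left v b))⟩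

theorem pairwise_disjoint_Ioc_of_monotone {k : ℕ} {x : Fin (k + 2) → ℝ} (hx : Monotone x) :
    Pairwise (Disjoint on fun m : Fin (k + 1) ↦ Ioc (x m.castSucc) (x m.succ)) := by
  intro l m hlm
  wlog hlt : l < m generalizing l m
  · exact (this hlm.symm (hlm.lt_or_gt.resolve_left hlt)).symm
  exact Ioc_disjoint_Ioc_of_le (hx (Fin.succ_le_castSucc_iff.mpr hlt))

section piece

variable {n k : ℕ} {x : Fin (k + 2) → ℝ} {owner : Fin (k + 1) → Fin n} {i : Fin n}

theorem measurableSet_piece : MeasurableSet (piece x owner i) :=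
  .iUnion fun _ ↦ .iUnion fun _ ↦ measurableSet_Ioc

theorem exists_owner_eq_of_measure_piece_inter_ne_zero {μ : Measure ℝ} {S : Set ℝ}
    (h : μ (piece x owner i ∩ S) ≠ 0) :
    ∃ m, owner m = i ∧ μ (Ioc (x m.castSucc) (x m.succ) ∩ S) ≠ 0 := by
  simpa [piece, iUnion_inter, measure_iUnion_null_iff] using h

theorem disjoint_piece_of_subset_Ioc (hx : Monotone x) {m : Fin (k + 1)} (hm : owner m ≠ i)
    {S : Set ℝ} (hS : S ⊆ Ioc (x m.castSucc) (x m.succ)) : Disjoint (piece x owner i) S := by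
  simp only [piece, disjoint_iUnion_left]
  rintro l rfl
  exact (pairwise_disjoint_Ioc_of_monotone hx (by rintro rfl; exact hm rfl)).mono_right hS

end piece

namespace CutLowerBound

def slot (n j : ℕ) : Set ℝ := Icc (j / (2 * n - 1 : ℝ)) ((j + 1) / (2 * n - 1 : ℝ))

def evenSlots (n : ℕ) : Set ℝ := ⋃ j : Fin n, slot n (2 * j)

def support (n : ℕ) (i : Fin n) : Set ℝ :=
  if (i : ℕ) = 0 then evenSlots n else slot n (2 * i - 1)

def valuation (n : ℕ) (i : Fin n) : Measure ℝ := volume.restrict (support n i)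

def entitlement (n : ℕ) (i : Fin n) : ℝ :=
  if (i : ℕ) = 0 then 1 - (n - 1) / n ^ 2 else 1 / n ^ 2

variable {n : ℕ}

theorem two_mul_sub_one_pos (hn : 0 < n) : (0 : ℝ) < 2 * n - 1 := by
  have : (1 : ℝ) ≤ n := by exact_mod_cast hn
  linarith

theorem volume_slot (n j : ℕ) : volume (slot n j) = ENNReal.ofReal (1 / (2 * n - 1)) := by
  rw [slot, Real.volume_Icc, ← sub_div, add_sub_cancel_left]

theorem slot_subset_Icc {j : ℕ} (hj : j < 2 * n - 1) : slot n j ⊆ Icc 0 1 := by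
  have hd := two_mul_sub_one_pos (n := n) (by omega)
  have hj' : (j : ℝ) + 1 ≤ 2 * n - 1 := by
    have : j + 1 + 1 ≤ 2 * n := by omega
    have : (j : ℝ) + 1 + 1 ≤ 2 * n := by exact_mod_cast this
    linarith
  exact Icc_subset_Icc (by positivity) ((div_le_one hd).mpr hj')

theorem disjoint_slot (hn : 0 < n) {j j' : ℕ} (h : j + 1 < j') :
    Disjoint (slot n j) (slot n j') := by
  have hd := two_mul_sub_one_pos hn
  have h' : (j : ℝ) + 1 < j' := by exact_mod_cast h
  rw [disjoint_left]
  rintro y ⟨-, hy⟩ ⟨hy', -⟩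
  exact (div_lt_div_of_pos_right h' hd).not_ge (hy'.trans hy)

theorem slot_subset_Ioc (hn : 0 < n) {u v : ℝ} {a b c : ℕ}
    (ha : volume (Ioc u v ∩ slot n a) ≠ 0) (hb : volume (Ioc u v ∩ slot n b) ≠ 0)
    (hac : a < c) (hcb : c < b) : slot n c ⊆ Ioc u v := by
  have hd := two_mul_sub_one_pos hn
  have hu := (lt_and_lt_of_volume_Ioc_inter_Icc_ne_zero ha).1
  have hv := (lt_and_lt_of_volume_Ioc_inter_Icc_ne_zero hb).2
  have hac' : (a : ℝ) + 1 ≤ c := by exact_mod_cast hac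
  have hcb' : (c : ℝ) + 1 ≤ b := by exact_mod_cast hcb
  rintro y ⟨hy, hy'⟩
  exact ⟨hu.trans_le ((div_le_div_iff_of_pos_right hd).mpr hac' |>.trans hy),
    hy'.trans ((div_le_div_iff_of_pos_right hd).mpr hcb') |>.trans_lt hv |>.le⟩

theorem volume_evenSlots (n : ℕ) : volume (evenSlots n) = ENNReal.ofReal (n / (2 * n - 1)) := by
  have hdisj : Pairwise (Disjoint on fun j : Fin n ↦ slot n (2 * j)) := fun j j' hjj' ↦ by
    rcases Fin.lt_or_lt_of_ne hjj' with h | h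
    · exact disjoint_slot j.pos (by omega)
    · exact (disjoint_slot j.pos (by omega)).symm
  rw [evenSlots, measure_iUnion hdisj fun _ ↦ measurableSet_Icc, tsum_fintype]
  simp only [volume_slot, Finset.sum_const, Finset.card_univ, Fintype.card_fin, nsmul_eq_mul]
  rw [← ENNReal.ofReal_natCast, ← ENNReal.ofReal_mul n.cast_nonneg, mul_one_div]

theorem volume_evenSlots_sdiff_slot (j : Fin n) :
    volume (evenSlots n \ slot n (2 * j)) = ENNReal.ofReal ((n - 1) / (2 * n - 1)) := by
  have hd := two_mul_sub_one_pos j.pos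
  have hsub : slot n (2 * j) ⊆ evenSlots n := subset_iUnion (fun j : Fin n ↦ slot n (2 * j)) j
  rw [measure_sdiff hsub measurableSet_Icc.nullMeasurableSet (by simp [volume_slot]),
    volume_evenSlots, volume_slot, ← ENNReal.ofReal_sub _ (by positivity), sub_div]

theorem support_subset_Icc (i : Fin n) : support n i ⊆ Icc 0 1 := by
  unfold support evenSlots
  split_ifs
  · exact iUnion_subset fun j ↦ slot_subset_Icc (by omega)
  · exact slot_subset_Icc (by omega)

theorem volume_support_pos (i : Fin n) : 0 < volume (support n i) := by
  have hd := two_mul_sub_one_pos i.pos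
  unfold support
  split_ifs
  · rw [volume_evenSlots]; exact ENNReal.ofReal_pos.mpr (div_pos (by exact_mod_cast i.pos) hd)
  · rw [volume_slot]; exact ENNReal.ofReal_pos.mpr (one_div_pos.mpr hd)

theorem valuation_apply (i : Fin n) {s : Set ℝ} (hs : MeasurableSet s) :
    valuation n i s = volume (s ∩ support n i) :=
  Measure.restrict_apply hs

theorem valuation_Icc (i : Fin n) : valuation n i (Icc 0 1) = volume (support n i) := by
  rw [valuation_apply i measurableSet_Icc, inter_eq_right.mpr (support_subset_Icc i)]

theorem valuation_compl_Icc (i : Fin n) : valuation n i (Icc 0 1)ᶜ = 0 := by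
  rw [valuation_apply i measurableSet_Icc.compl,
    (disjoint_compl_left.mono_right (support_subset_Icc i)).inter_eq, measure_empty]

instance (i : Fin n) : IsFiniteMeasure (valuation n i) :=
  isFiniteMeasure_restrict.mpr ((measure_mono (support_subset_Icc i)).trans_lt
    measure_Icc_lt_top).ne

instance (i : Fin n) : NullSingletonClass (valuation n i) := by
  unfold valuation; infer_instance

theorem entitlement_pos (i : Fin n) : 0 < entitlement n i := by
  have hn : (1 : ℝ) ≤ n := by exact_mod_cast i.pos
  unfold entitlement
  split_ifs
  · have : ((n : ℝ) - 1) / n ^ 2 < 1 := (div_lt_one (by positivity)).mpr (by nlinarith)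
    linarith
  · positivity

theorem sum_entitlement (hn : 0 < n) : ∑ i, entitlement n i = 1 := by
  obtain ⟨m, rfl⟩ : ∃ m, n = m + 1 := ⟨n - 1, by omega⟩
  simp only [entitlement, Fin.sum_univ_succ, Fin.val_zero, Fin.val_succ, reduceIte,
    Nat.succ_ne_zero, Finset.sum_const, Finset.card_univ, Fintype.card_fin, nsmul_eq_mul,
    Nat.cast_add, Nat.cast_one, add_sub_cancel_right]
  field_simp
  ring

theorem volume_evenSlots_sdiff_slot_lt (j : Fin n) :
    volume (evenSlots n \ slot n (2 * j)) <
      ENNReal.ofReal (entitlement n ⟨0, j.pos⟩) * volume (evenSlots n) := by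
  have hd := two_mul_sub_one_pos j.pos
  have hn : (0 : ℝ) < n := by exact_mod_cast j.pos
  rw [volume_evenSlots_sdiff_slot, volume_evenSlots, ← ENNReal.ofReal_mul (entitlement_pos _).le,
    ENNReal.ofReal_lt_ofReal_iff (mul_pos (entitlement_pos _) (div_pos hn hd)), mul_div_assoc',
    div_lt_div_iff_of_pos_right hd, entitlement, if_pos rfl]
  have : (1 - (n - 1) / (n : ℝ) ^ 2) * n = n - 1 + 1 / n := by field_simp; ring
  rw [this]
  linarith [one_div_pos.mpr hn]

section division

variable {k : ℕ} {x : Fin (k + 2) → ℝ} {owner : Fin (k + 1) → Fin n}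

theorem volume_piece_inter_support_ne_zero {i : Fin n}
    (h : ENNReal.ofReal (entitlement n i) * valuation n i (Icc 0 1) ≤
      valuation n i (piece x owner i)) :
    volume (piece x owner i ∩ support n i) ≠ 0 := by
  rw [← valuation_apply i measurableSet_piece]
  refine (lt_of_lt_of_le ?_ h).ne'
  rw [valuation_Icc]
  exact ENNReal.mul_pos (ENNReal.ofReal_pos.mpr (entitlement_pos i)).ne'
    (volume_support_pos i).ne'

theorem volume_piece_inter_slot_ne_zero (hn : 0 < n)
    (h : ENNReal.ofReal (entitlement n ⟨0, hn⟩) * valuation n ⟨0, hn⟩ (Icc 0 1) ≤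
      valuation n ⟨0, hn⟩ (piece x owner ⟨0, hn⟩)) (j : Fin n) :
    volume (piece x owner ⟨0, hn⟩ ∩ slot n (2 * j)) ≠ 0 := by
  rw [valuation_Icc, valuation_apply _ measurableSet_piece, support, if_pos rfl] at h
  exact measure_inter_ne_zero_of_measure_sdiff_lt ((volume_evenSlots_sdiff_slot_lt j).trans_le h)

open Finset in
theorem two_mul_sub_two_le_of_volume_piece_inter_ne_zero (hn : 0 < n) (hx : Monotone x)
    (hsupport : ∀ i, volume (piece x owner i ∩ support n i) ≠ 0)
    (hslot : ∀ j : Fin n, volume (piece x owner ⟨0, hn⟩ ∩ slot n (2 * j)) ≠ 0) :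
    2 * n - 2 ≤ k := by
  choose g hg_owner hg_slot using fun j ↦ exists_owner_eq_of_measure_piece_inter_ne_zero (hslot j)
  have hg : Injective g := by
    intro j j' hjj'
    by_contra hne
    wlog hlt : j < j' generalizing j j'
    · exact this hjj'.symm (Ne.symm hne) ((Ne.symm hne).lt_of_le (not_lt.mp hlt))
    have hlt' : (j : ℕ) < j' := hlt
    -- the odd slot between the even slots `2j` and `2j'` is all that agent `j + 1` values
    let i : Fin n := ⟨j + 1, by omega⟩
    have hsub : support n i ⊆ Ioc (x (g j).castSucc) (x (g j).succ) := by
      rw [support, if_neg (Nat.succ_ne_zero _)]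
      exact slot_subset_Ioc hn (hg_slot j) (hjj' ▸ hg_slot j') (by simp only [i]; omega)
        (by simp only [i]; omega)
    have hi : owner (g j) ≠ i := by
      rw [hg_owner]; exact fun h ↦ Nat.succ_ne_zero _ (congrArg Fin.val h).symm
    exact hsupport i (by rw [(disjoint_piece_of_subset_Ioc hx hi hsub).inter_eq, measure_empty])
  have hfiber : n ≤ #{m | owner m = ⟨0, hn⟩} := by
    simpa using card_le_card_of_injOn g (s := univ) (fun j _ ↦ by simp [hg_owner]) hg.injOn
  have hcount := add_card_sub_one_le_card_of_fiber owner ⟨0, hn⟩ hfiber fun i _ ↦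
    (exists_owner_eq_of_measure_piece_inter_ne_zero (hsupport i)).imp fun _ ↦ And.left
  simp only [Fintype.card_fin] at hcount
  omega

end division

end CutLowerBound

open CutLowerBound in
/-- For every `n ≥ 2` there are `n` nonatomic value measures on `[0,1]` and an entitlement
vector `t` such that every `t`-proportional division requires at least `2n - 2` cuts. -/
theorem lower_bound_two_n_minus_two_cuts (n : ℕ) (hn : 2 ≤ n) :
    ∃ (V : Fin n → Measure ℝ) (t : Fin n → ℝ),
      (∀ i, IsFiniteMeasure (V i)) ∧ (∀ i, NoAtoms (V i)) ∧
      (∀ i, V i ((Icc (0:ℝ) 1)ᶜ) = 0) ∧ (∀ i, 0 < V i (Icc (0:ℝ) 1)) ∧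
      (∀ i, 0 < t i) ∧ (∑ i, t i) = 1 ∧
      ∀ (k : ℕ) (x : Fin (k + 2) → ℝ) (owner : Fin (k + 1) → Fin n),
        IsDivision x →
        (∀ i, ENNReal.ofReal (t i) * V i (Icc (0:ℝ) 1) ≤ V i (piece x owner i)) →
        2 * n - 2 ≤ k := by
  have hn0 : 0 < n := by omega
  refine ⟨valuation n, entitlement n, fun i ↦ inferInstance,
    fun i ↦ (inferInstance : NullSingletonClass (valuation n i)), valuation_compl_Icc,
    fun i ↦ valuation_Icc i ▸ volume_support_pos i, entitlement_pos, sum_entitlement hn0, ?_⟩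
  intro k x owner hdiv hprop
  exact two_mul_sub_two_le_of_volume_piece_inter_ne_zero hn0 hdiv.1
    (fun i ↦ volume_piece_inter_support_ne_zero (hprop i))
    (volume_piece_inter_slot_ne_zero hn0 (hprop _))
end
end

section
/- Let f(n) = 2n·log₂(n̂) − 2n̂ + 2 where n̂ = 2^⌈log₂ n⌉. Then for every n ≥ 2, with n_A = ⌊n/2⌋ and n_B = ⌈n/2⌉, we have (2n − 2) + f(n_A) + f(n_B) ≤ f(n), using that the rounded-up powers of two satisfy n̂_A ≤ n̂/2 and n̂_B ≤ n̂/2. -/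
/-!
Write `f m = fAt m ⌈log₂ m⌉` with `fAt m j = 2mj - 2·2^j + 2`. Since `fAt m (j + 1) - fAt m j = 2(m - 2^j)`,
`f m = fAt m (j + 1)` whenever `2^j ≤ m ≤ 2^(j+1)`. For `n ≥ 2` both halves of `n` lie in
`[2^c, 2^(c+1)]` with `c = ⌊log₂ ⌊n/2⌋⌋`, and `n` lies in `[2^(c+1), 2^(c+2)]`; at these common
exponents `fAt` satisfies the recursion with equality.
-/

noncomputable section

/-- `f m = 2 m log₂ m̂ - 2 m̂ + 2`, where `m̂ = 2 ^ ⌈log₂ m⌉` is `m` rounded up to the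
nearest power of two (so `log₂ m̂ = ⌈log₂ m⌉ = Nat.clog 2 m`). Valued in `ℤ`. -/
def f (m : ℕ) : ℤ :=
  2 * m * Nat.clog 2 m - 2 * 2 ^ (Nat.clog 2 m) + 2

def fAt (m j : ℕ) : ℤ :=
  2 * m * j - 2 * 2 ^ j + 2

theorem fAt_clog (m : ℕ) : fAt m (Nat.clog 2 m) = f m := rfl

theorem fAt_pow_succ (j : ℕ) : fAt (2 ^ j) (j + 1) = fAt (2 ^ j) j := by
  simp only [fAt]
  push_cast
  ring

theorem fAt_add_succ (a b j : ℕ) :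
    fAt (a + b) (j + 1) = (2 * ((a + b : ℕ) : ℤ) - 2) + fAt a j + fAt b j := by
  simp only [fAt]
  push_cast
  ring

theorem f_eq_fAt_succ {m j : ℕ} (hlo : 2 ^ j ≤ m) (hhi : m ≤ 2 ^ (j + 1)) :
    f m = fAt m (j + 1) := by
  rcases hlo.eq_or_lt with rfl | hlt
  · rw [← fAt_clog, Nat.clog_pow 2 j one_lt_two, fAt_pow_succ]
  · rw [← fAt_clog]
    congr 1
    exact le_antisymm (Nat.clog_le_of_le_pow hhi) ((Nat.lt_clog_iff_pow_lt one_lt_two).2 hlt)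

theorem f_recursion_eq {n : ℕ} (hn : 2 ≤ n) :
    (2 * (n : ℤ) - 2) + f (n / 2) + f (n - n / 2) = f n := by
  set c := Nat.log 2 (n / 2)
  have hlo : 2 ^ c ≤ n / 2 := Nat.pow_log_le_self 2 (by omega)
  have hhi : n / 2 < 2 ^ (c + 1) := Nat.lt_pow_succ_log_self one_lt_two _
  have hpow₁ : 2 ^ (c + 1) = 2 * 2 ^ c := pow_succ' 2 c
  have hpow₂ : 2 ^ (c + 1 + 1) = 2 * 2 ^ (c + 1) := pow_succ' 2 (c + 1)
  have hsplit : n = n / 2 + (n - n / 2) := by omega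
  rw [f_eq_fAt_succ hlo hhi.le, f_eq_fAt_succ (j := c) (by omega) (by omega),
    f_eq_fAt_succ (m := n) (j := c + 1) (by omega) (by omega)]
  conv_rhs => rw [hsplit, fAt_add_succ, ← hsplit]

/-- The recursion for the upper bound: for `n ≥ 2`, with `n_A = ⌊n/2⌋`, `n_B = ⌈n/2⌉`,
`(2n - 2) + f(n_A) + f(n_B) ≤ f(n)`. -/
theorem f_recursion (n : ℕ) (hn : 2 ≤ n) :
    (2 * (n:ℤ) - 2) + f (n / 2) + f (n - n / 2) ≤ f n :=
  (f_recursion_eq hn).le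
end
end

section
/- For n = 2 agents with nonatomic probability measures V_1, V_2 on [0,1] and entitlements t_1, t_2 > 0 with t_1 + t_2 = 1, there exists a t-proportional allocation using at most 2 cuts (i.e., a partition of [0,1] into at most 3 intervals assigned to the two agents such that each agent i receives total value at least t_i). -/
open MeasureTheory Set

noncomputable section

/-! Reparametrize the cake by agent 0's quantile function, so that agent 0 sees the circle `ℝ/ℤ`
with Lebesgue measure, and look at the arcs `[θ, θ + t₀]`. Each is worth exactly `t₀` to agent 0.
Agent 1 values such an arc at `h (θ + t₀) - h θ`, where `h` is the degree-one lift of agent 1's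
distribution function read through the quantile; since `h x - x` is periodic, this value averages
to `t₀` over `θ`, so some arc is worth at most `t₀` to agent 1 and goes to agent 0. Cutting the
circle open at `0`, an arc is an interval or the complement of one, which takes two cuts. -/

open ProbabilityTheory

theorem exists_monotone_rightInvOn_of_continuousOn {F : ℝ → ℝ} {a b : ℝ} (hab : a ≤ b)
    (hF : ContinuousOn F (Icc a b)) :
    ∃ q : ℝ → ℝ, Monotone q ∧ (∀ s, q s ∈ Icc a b) ∧ RightInvOn q F (Icc (F a) (F b)) := by
  -- Clamping at `F b` keeps `S s` nonempty for every `s`, so `q` is monotone on all of `ℝ`.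
  set S : ℝ → Set ℝ := fun s => Icc a b ∩ F ⁻¹' Ici (min s (F b))
  have hb : ∀ s, b ∈ S s := fun s =>
    ⟨right_mem_Icc.2 hab, show min s (F b) ≤ F b from min_le_right _ _⟩
  have hbdd : ∀ s, BddBelow (S s) := fun s => ⟨a, fun x hx => hx.1.1⟩
  have hmem : ∀ s, sInf (S s) ∈ S s := fun s =>
    (hF.preimage_isClosed_of_isClosed isClosed_Icc isClosed_Ici).csInf_mem ⟨b, hb s⟩ (hbdd s)
  refine ⟨fun s => sInf (S s), fun s t hst => csInf_le_csInf (hbdd s) ⟨b, hb t⟩ ?_,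
    fun s => (hmem s).1, fun s hs => ?_⟩
  · exact fun x hx => ⟨hx.1, le_trans (min_le_min_right _ hst) hx.2⟩
  have hmin : min s (F b) = s := min_eq_left hs.2
  obtain ⟨hqab, hsq⟩ := hmem s
  rw [mem_preimage, hmin, mem_Ici] at hsq
  obtain ⟨x, hx, hFx⟩ : ∃ x ∈ Icc a (sInf (S s)), F x = s :=
    intermediate_value_Icc hqab.1 (hF.mono (Icc_subset_Icc_right hqab.2)) ⟨hs.1, hsq⟩
  have : sInf (S s) ≤ x :=
    csInf_le (hbdd s) ⟨⟨hx.1, hx.2.trans hqab.2⟩, by simp [hmin, hFx]⟩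
  rwa [le_antisymm hx.2 this] at hFx

theorem Function.Periodic.exists_mem_Ioo_apply_add_le {g : ℝ → ℝ} {T : ℝ}
    (hg : Function.Periodic g T) (hT : 0 < T) (hint : IntervalIntegrable g volume 0 T) (p : ℝ) :
    ∃ x ∈ Ioo 0 T, g (x + p) ≤ g x := by
  have hshift : IntervalIntegrable (fun x => g (x + p)) volume 0 T := by
    simpa using (hg.intervalIntegrable hT.ne' (by rwa [zero_add]) p (T + p)).comp_add_right p
  by_contra! h
  have hpos : 0 < ∫ x in 0..T, (g (x + p) - g x) :=
    intervalIntegral.intervalIntegral_pos_of_pos_on (hshift.sub hint)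
      (fun x hx => sub_pos.2 (h x hx)) hT
  rw [intervalIntegral.integral_sub hshift hint, intervalIntegral.integral_comp_add_right, zero_add,
    add_comm T p, hg.intervalIntegral_add_eq p 0, zero_add, sub_self] at hpos
  exact lt_irrefl 0 hpos

def circleLift (H : ℝ → ℝ) (x : ℝ) : ℝ := ⌊x⌋ + H (Int.fract x)

theorem circleLift_add_one (H : ℝ → ℝ) (x : ℝ) : circleLift H (x + 1) = circleLift H x + 1 := by
  simp only [circleLift, Int.floor_add_one, Int.fract_add_one, Int.cast_add, Int.cast_one]
  ring

theorem circleLift_of_mem_Ico (H : ℝ → ℝ) {x : ℝ} (hx : x ∈ Ico (0:ℝ) 1) :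
    circleLift H x = H x := by
  simp [circleLift, Int.floor_eq_zero_iff.2 hx, Int.fract_eq_self.2 hx]

theorem monotone_circleLift {H : ℝ → ℝ} (hH : Monotone H) (h1 : H 1 ≤ H 0 + 1) :
    Monotone (circleLift H) := by
  intro x y hxy
  rcases (Int.floor_mono hxy).eq_or_lt with h | h
  · have : Int.fract x ≤ Int.fract y := by
      unfold Int.fract; rw [h]; linarith
    unfold circleLift; rw [h]; gcongr; exact hH this
  · have h' : (⌊x⌋ : ℝ) + 1 ≤ ⌊y⌋ := by exact_mod_cast h
    calc circleLift H x ≤ ⌊x⌋ + H 1 := by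
          unfold circleLift; gcongr; exact hH (Int.fract_lt_one x).le
      _ ≤ ⌊x⌋ + 1 + H 0 := by linarith
      _ ≤ circleLift H y := by
          unfold circleLift; gcongr; exact hH (Int.fract_nonneg y)

theorem exists_arc_increment_le {H : ℝ → ℝ} (hH : Monotone H) (h1 : H 1 ≤ H 0 + 1) {p : ℝ}
    (hp0 : 0 ≤ p) (hp1 : p ≤ 1) :
    ∃ θ ∈ Ioo (0:ℝ) 1, (θ + p < 1 ∧ H (θ + p) - H θ ≤ p) ∨
      (1 ≤ θ + p ∧ H (θ + p - 1) + 1 - H θ ≤ p) := by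
  have hper : Function.Periodic (fun x => circleLift H x - x) 1 := fun x => by
    simp only [circleLift_add_one]; ring
  obtain ⟨θ, hθ, hle⟩ := hper.exists_mem_Ioo_apply_add_le one_pos
    ((monotone_circleLift hH h1).intervalIntegrable.sub intervalIntegral.intervalIntegrable_id) p
  have hθ' : θ ∈ Ico (0:ℝ) 1 := Ioo_subset_Ico_self hθ
  refine ⟨θ, hθ, ?_⟩
  rcases lt_or_ge (θ + p) 1 with hlt | hge
  · left
    rw [circleLift_of_mem_Ico H ⟨by linarith [hθ.1], hlt⟩, circleLift_of_mem_Ico H hθ'] at hle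
    exact ⟨hlt, by linarith⟩
  · right
    have : circleLift H (θ + p) = H (θ + p - 1) + 1 := by
      rw [← circleLift_of_mem_Ico H ⟨by linarith, by linarith [hθ.2]⟩, ← circleLift_add_one,
        sub_add_cancel]
    rw [this, circleLift_of_mem_Ico H hθ'] at hle
    exact ⟨hge, by linarith⟩

theorem exists_Ioc_split {F G : ℝ → ℝ} (hF : ContinuousOn F (Icc 0 1)) (hF0 : F 0 = 0)
    (hF1 : F 1 = 1) (hG : Monotone G) (hG1 : G 1 ≤ G 0 + 1) {p : ℝ} (hp0 : 0 ≤ p) (hp1 : p ≤ 1) :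
    ∃ a b : ℝ, 0 ≤ a ∧ a ≤ b ∧ b ≤ 1 ∧
      ((F b - F a = p ∧ G b - G a ≤ p) ∨ (F b - F a = 1 - p ∧ 1 - p ≤ G b - G a)) := by
  obtain ⟨q, hq, hq01, hFq⟩ := exists_monotone_rightInvOn_of_continuousOn zero_le_one hF
  rw [hF0, hF1] at hFq
  have hH1 : G (q 1) ≤ G (q 0) + 1 :=
    calc G (q 1) ≤ G 1 := hG (hq01 1).2
      _ ≤ G 0 + 1 := hG1
      _ ≤ G (q 0) + 1 := by gcongr; exact hG (hq01 0).1
  obtain ⟨θ, hθ, ⟨hlt, hle⟩ | ⟨hge, hle⟩⟩ := exists_arc_increment_le (hG.comp hq) hH1 hp0 hp1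
  · refine ⟨q θ, q (θ + p), (hq01 θ).1, hq (by linarith), (hq01 _).2, Or.inl ⟨?_, hle⟩⟩
    rw [hFq ⟨hθ.1.le, hθ.2.le⟩, hFq (x := θ + p) ⟨by linarith [hθ.1], hlt.le⟩]
    ring
  · refine ⟨q (θ + p - 1), q θ, (hq01 _).1, hq (by linarith), (hq01 θ).2,
      Or.inr ⟨?_, by simp only [Function.comp_apply] at hle; linarith⟩⟩
    rw [hFq ⟨hθ.1.le, hθ.2.le⟩, hFq (x := θ + p - 1) ⟨by linarith, by linarith [hθ.2]⟩]
    ring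

section cdf

variable (μ : Measure ℝ) [IsProbabilityMeasure μ]

theorem continuous_cdf [NullSingletonClass μ] : Continuous (cdf μ) := by
  refine continuous_iff_continuousAt.2 fun x => ?_
  rw [(monotone_cdf μ).continuousAt_iff_leftLim_eq_rightLim, StieltjesFunction.rightLim_eq]
  have h := (cdf μ).measure_singleton x
  rw [measure_cdf, measure_singleton, eq_comm, ENNReal.ofReal_eq_zero] at h
  linarith [(monotone_cdf μ).leftLim_le (le_refl x)]

theorem measure_Ioc_eq_ofReal_cdf_sub (a b : ℝ) :
    μ (Ioc a b) = ENNReal.ofReal (cdf μ b - cdf μ a) := by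
  rw [← (cdf μ).measure_Ioc, measure_cdf]

variable {μ} (hμ : μ (Icc 0 1)ᶜ = 0)
include hμ

theorem cdf_one_of_measure_compl_Icc : cdf μ 1 = 1 := by
  have : μ (Iic 1) = 1 := (prob_compl_eq_zero_iff measurableSet_Iic).1
    (measure_mono_null (compl_subset_compl.2 Icc_subset_Iic_self) hμ)
  rw [cdf_eq_real, measureReal_def, this, ENNReal.toReal_one]

theorem cdf_zero_of_measure_compl_Icc [NullSingletonClass μ] : cdf μ 0 = 0 := by
  have : μ (Iic 0) = 0 := by
    refine measure_mono_null (fun x hx => ?_)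
      (measure_union_null hμ (measure_singleton (μ := μ) 0))
    rcases (mem_Iic.1 hx).lt_or_eq with h | h
    · exact Or.inl fun h' => not_lt.2 h'.1 h
    · exact Or.inr h
  rw [cdf_eq_real, measureReal_def, this, ENNReal.toReal_zero]

theorem measure_Ioc_union_Ioc_eq_ofReal [NullSingletonClass μ] {a b : ℝ} (hab : a ≤ b) :
    μ (Ioc 0 a ∪ Ioc b 1) = ENNReal.ofReal (1 - (cdf μ b - cdf μ a)) := by
  rw [measure_union (Ioc_disjoint_Ioc_of_le hab) measurableSet_Ioc,
    measure_Ioc_eq_ofReal_cdf_sub, measure_Ioc_eq_ofReal_cdf_sub,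
    cdf_zero_of_measure_compl_Icc hμ, cdf_one_of_measure_compl_Icc hμ,
    ← ENNReal.ofReal_add (by linarith [cdf_nonneg μ a]) (by linarith [cdf_le_one μ b])]
  ring_nf

end cdf

theorem isDivision_three {a b : ℝ} (ha : 0 ≤ a) (hab : a ≤ b) (hb : b ≤ 1) :
    IsDivision ![0, a, b, 1] := by
  refine ⟨Fin.monotone_iff_le_succ.2 fun i => ?_, rfl, rfl⟩
  fin_cases i <;> simpa

theorem piece_middle {n : ℕ} {i j : Fin n} (hji : j ≠ i) (a b : ℝ) :
    piece ![0, a, b, 1] ![j, i, j] i = Ioc a b := by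
  ext y
  simp [piece, Fin.exists_fin_succ, hji]

theorem piece_outer {n : ℕ} {i j : Fin n} (hij : i ≠ j) (a b : ℝ) :
    piece ![0, a, b, 1] ![j, i, j] j = Ioc 0 a ∪ Ioc b 1 := by
  ext y
  simp [piece, Fin.exists_fin_succ, hij]

/-- Two agents with nonatomic probability measures on `[0,1]` and entitlements
`t₁, t₂ > 0`, `t₁ + t₂ = 1`, admit a `t`-proportional allocation with at most 2 cuts. -/
theorem two_agents_two_cuts
    (V : Fin 2 → Measure ℝ)
    (hprob : ∀ i, IsProbabilityMeasure (V i)) (hna : ∀ i, NoAtoms (V i))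
    (hsupp : ∀ i, V i ((Icc (0:ℝ) 1)ᶜ) = 0)
    (t : Fin 2 → ℝ) (htpos : ∀ i, 0 < t i) (htsum : t 0 + t 1 = 1) :
    ∃ (k : ℕ), k ≤ 2 ∧
      ∃ (x : Fin (k + 2) → ℝ) (owner : Fin (k + 1) → Fin 2),
        IsDivision x ∧
        ∀ i, ENNReal.ofReal (t i) ≤ V i (piece x owner i) := by
  have (i : Fin 2) : NullSingletonClass (V i) := hna i
  obtain ⟨a, b, ha, hab, hb, h⟩ := exists_Ioc_split (continuous_cdf (V 0)).continuousOn
    (cdf_zero_of_measure_compl_Icc (hsupp 0)) (cdf_one_of_measure_compl_Icc (hsupp 0))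
    (monotone_cdf (V 1)) (by linarith [cdf_le_one (V 1) 1, cdf_nonneg (V 1) 0])
    (htpos 0).le (by linarith [htpos 1] : t 0 ≤ 1)
  have ht1 : t 1 = 1 - t 0 := by linarith
  refine ⟨2, le_rfl, ![0, a, b, 1], ?_⟩
  rcases h with ⟨h0, h1⟩ | ⟨h0, h1⟩
  · refine ⟨![1, 0, 1], isDivision_three ha hab hb, Fin.forall_fin_two.2 ⟨?_, ?_⟩⟩
    · rw [piece_middle one_ne_zero, measure_Ioc_eq_ofReal_cdf_sub, h0]
    · rw [piece_outer zero_ne_one, measure_Ioc_union_Ioc_eq_ofReal (hsupp 1) hab, ht1]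
      exact ENNReal.ofReal_le_ofReal (by linarith)
  · refine ⟨![0, 1, 0], isDivision_three ha hab hb, Fin.forall_fin_two.2 ⟨?_, ?_⟩⟩
    · rw [piece_outer one_ne_zero, measure_Ioc_union_Ioc_eq_ofReal (hsupp 0) hab, h0,
        sub_sub_cancel]
    · rw [piece_middle zero_ne_one, measure_Ioc_eq_ofReal_cdf_sub, ht1]
      exact ENNReal.ofReal_le_ofReal h1
end
end

section
/- For every n ≥ 2 and integer D ≥ n, if n−1 of the entitlements equal 1/D (so the remaining entitlement is (D−n+1)/D), then for any n nonatomic probability measures on [0,1] there exists a t-proportional allocation using at most 2n−2 cuts. -/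
/-!
Replace agent `il` by `D - n + 1` copies of itself, so that all `D` virtual agents are entitled
to `1/D`, and run the Dubins–Spanier moving knife: the agent whose `1/D`-mark is leftmost takes
the interval up to its mark, and every other agent still values the rest at least `1/D` times
the number of agents left. Merging adjacent intervals of the same owner, the pieces of `il`
become separated by pieces of the `n - 1` other agents, so at most `n` of them remain and the
division has at most `2n - 1` intervals.
-/

open MeasureTheory Set

noncomputable section

theorem continuousOn_measureReal_Ioc (μ : Measure ℝ) [IsLocallyFiniteMeasure μ]
    [NullSingletonClass μ] (a b : ℝ) : ContinuousOn (fun x => μ.real (Ioc a x)) (Icc a b) := by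
  simpa using intervalIntegral.continuousOn_primitive (μ := μ) (f := fun _ => (1 : ℝ))
    (integrableOn_const (measure_Icc_lt_top.ne))

theorem exists_measureReal_Ioc_eq (μ : Measure ℝ) [IsLocallyFiniteMeasure μ]
    [NullSingletonClass μ] {a b c : ℝ} (hab : a ≤ b) (hc : 0 ≤ c)
    (hcb : c ≤ μ.real (Ioc a b)) :
    ∃ x ∈ Icc a b, μ.real (Ioc a x) = c :=
  intermediate_value_Icc hab (continuousOn_measureReal_Ioc μ a b) ⟨by simpa using hc, hcb⟩

theorem List.IsChain.count_le_countP_ne_add_one {ι : Type*} [DecidableEq ι] {l : List ι}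
    (hl : l.IsChain (· ≠ ·)) (j : ι) : l.count j ≤ l.countP (· ≠ j) + 1 := by
  induction l using List.twoStepInduction with
  | nil => simp
  | singleton a => by_cases a = j <;> simp_all
  | cons_cons a b l ih ih' =>
    obtain ⟨hab, hbl⟩ := List.isChain_cons_cons.1 hl
    by_cases ha : a = j
    · subst ha
      have := ih hbl.tail
      simp_all [List.count_cons, List.countP_cons, Ne.symm hab]
    · rw [List.count_cons_of_ne ha, List.countP_cons_of_pos (by simpa using ha)]
      exact (ih' b hbl).trans (Nat.le_succ _)

section MergeRuns

variable {ι α : Type*} [DecidableEq ι]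

-- Keeps the last pair of each run of equal owners: its right endpoint ends the whole run.
def mergeRuns : List (ι × α) → List (ι × α)
  | [] => []
  | [p] => [p]
  | p :: q :: L => if p.1 = q.1 then mergeRuns (q :: L) else p :: mergeRuns (q :: L)

theorem mergeRuns_sublist (L : List (ι × α)) : (mergeRuns L).Sublist L := by
  fun_induction mergeRuns L with
  | case1 | case2 => exact List.Sublist.refl _
  | case3 p q L _ ih => exact ih.cons p
  | case4 p q L _ ih => exact ih.cons_cons p

theorem head?_mergeRuns_fst (L : List (ι × α)) :
    ((mergeRuns L).map Prod.fst).head? = (L.map Prod.fst).head? := by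
  fun_induction mergeRuns L <;> simp_all

theorem getLast?_mergeRuns (L : List (ι × α)) : (mergeRuns L).getLast? = L.getLast? := by
  fun_induction mergeRuns L <;> simp_all [List.getLast?_cons]

theorem isChain_mergeRuns_fst (L : List (ι × α)) :
    ((mergeRuns L).map Prod.fst).IsChain (· ≠ ·) := by
  fun_induction mergeRuns L with
  | case1 => exact List.isChain_nil
  | case2 p => exact List.isChain_singleton _
  | case3 => assumption
  | case4 p q L hpq ih =>
    refine List.isChain_cons.2 ⟨fun y hy => ?_, ih⟩
    rw [head?_mergeRuns_fst] at hy
    simp_all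

theorem length_mergeRuns_le (L : List (ι × α)) (j : ι) :
    (mergeRuns L).length ≤ 2 * (L.map Prod.fst).countP (· ≠ j) + 1 := by
  have hsub := ((mergeRuns_sublist L).map Prod.fst).countP_le (p := (· ≠ j))
  have hcount := (isChain_mergeRuns_fst L).count_le_countP_ne_add_one j
  have hlen := ((mergeRuns L).map Prod.fst).length_eq_countP_add_countP (· == j)
  simp only [List.length_map, List.count_eq_countP, beq_iff_eq, ne_eq, decide_not] at *
  omega

end MergeRuns

section ListDivision

variable {ι : Type*}

def IsListDivision (a b : ℝ) (L : List (ι × ℝ)) : Prop :=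
  (a :: L.map Prod.snd).Pairwise (· ≤ ·) ∧ (L.map Prod.snd).getLast? = some b

theorem isListDivision_singleton {a b : ℝ} (hab : a ≤ b) (i : ι) :
    IsListDivision a b [(i, b)] := by
  simp [IsListDivision, hab]

theorem IsListDivision.cons {a b x : ℝ} {L : List (ι × ℝ)} (hax : a ≤ x)
    (hL : IsListDivision x b L) (i : ι) : IsListDivision a b ((i, x) :: L) := by
  obtain ⟨hsorted, hlast⟩ := hL
  refine ⟨List.pairwise_cons.2 ⟨?_, hsorted⟩, by simp [List.getLast?_cons, hlast]⟩
  simp only [List.map_cons, List.mem_cons]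
  rintro y (rfl | hy)
  exacts [hax, hax.trans (List.rel_of_pairwise_cons hsorted hy)]

variable [DecidableEq ι]

theorem IsListDivision.mergeRuns {a b : ℝ} {L : List (ι × ℝ)} (hL : IsListDivision a b L) :
    IsListDivision a b (mergeRuns L) :=
  ⟨hL.1.sublist (((mergeRuns_sublist L).map Prod.snd).cons_cons a),
    by rw [List.getLast?_map, getLast?_mergeRuns, ← List.getLast?_map]; exact hL.2⟩

/-- A list `L` of pairs (owner, right endpoint) encodes consecutive intervals starting at `a`;
`listPiece a L i` is the union of those owned by `i`. -/
def listPiece (a : ℝ) : List (ι × ℝ) → ι → Set ℝ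
  | [], _ => ∅
  | p :: L, i => (if p.1 = i then Ioc a p.2 else ∅) ∪ listPiece p.2 L i

theorem measurableSet_listPiece (a : ℝ) (L : List (ι × ℝ)) (i : ι) :
    MeasurableSet (listPiece a L i) := by
  induction L generalizing a with
  | nil => exact MeasurableSet.empty
  | cons p L ih =>
    refine MeasurableSet.union ?_ (ih p.2)
    split_ifs <;> simp

theorem listPiece_subset_Ioi {a : ℝ} {L : List (ι × ℝ)}
    (hL : (a :: L.map Prod.snd).Pairwise (· ≤ ·)) (i : ι) : listPiece a L i ⊆ Ioi a := by
  induction L generalizing a with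
  | nil => exact empty_subset _
  | cons p L ih =>
    obtain ⟨hap, hL'⟩ := List.pairwise_cons.1 hL
    refine union_subset ?_ ((ih hL').trans (Ioi_subset_Ioi (hap p.2 (by simp))))
    split_ifs
    exacts [Ioc_subset_Ioi_self, empty_subset _]

theorem measureReal_listPiece_cons (μ : Measure ℝ) [IsFiniteMeasure μ] {a x : ℝ}
    {L : List (ι × ℝ)} (hL : (a :: x :: L.map Prod.snd).Pairwise (· ≤ ·)) (j i : ι) :
    μ.real (listPiece a ((j, x) :: L) i) =
      (if j = i then μ.real (Ioc a x) else 0) + μ.real (listPiece x L i) := by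
  have hdisj : Disjoint (Ioc a x) (listPiece x L i) :=
    disjoint_left.2 fun _ hy hy' => (listPiece_subset_Ioi hL.of_cons i hy').not_ge hy.2
  split_ifs with hji
  · simp only [listPiece, hji, if_true]
    exact measureReal_union hdisj (measurableSet_listPiece x L i)
  · simp [listPiece, hji]

theorem exists_mem_Ioc_of_mem_listPiece {a y : ℝ} {L : List (ι × ℝ)} {i : ι}
    (hy : y ∈ listPiece a L i) :
    ∃ (j : ℕ) (hj : j < L.length), L[j].1 = i ∧
      y ∈ Ioc ((a :: L.map Prod.snd)[j]'(by simp; omega)) L[j].2 := by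
  induction L generalizing a with
  | nil => simp [listPiece] at hy
  | cons p L ih =>
    rcases hy with hy | hy
    · split_ifs at hy with hpi
      exacts [⟨0, by simp, hpi, hy⟩, absurd hy (notMem_empty y)]
    · obtain ⟨j, hj, hji, hyj⟩ := ih hy
      exact ⟨j + 1, by simpa using hj, hji, by simpa using hyj⟩

theorem listPiece_subset_listPiece_mergeRuns {a : ℝ} {L : List (ι × ℝ)}
    (hL : (a :: L.map Prod.snd).Pairwise (· ≤ ·)) (i : ι) :
    listPiece a L i ⊆ listPiece a (mergeRuns L) i := by
  fun_induction mergeRuns L generalizing a with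
  | case1 | case2 => exact subset_rfl
  | case3 p q L hpq ih =>
    have hap : a ≤ p.2 := List.rel_of_pairwise_cons hL (by simp)
    have hpq' : p.2 ≤ q.2 := List.rel_of_pairwise_cons hL.of_cons (by simp)
    refine (?_ : listPiece a (p :: q :: L) i ⊆ listPiece a (q :: L) i).trans
      (ih (hL.sublist ((List.sublist_cons_self _ _).cons_cons a)))
    simp only [listPiece, hpq]
    split_ifs
    · rw [← union_assoc, Ioc_union_Ioc_eq_Ioc hap hpq']
    · simp
  | case4 p q L hpq ih =>
    exact union_subset_union_right _ (ih (List.pairwise_cons.1 hL).2)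

variable {V : ι → Measure ℝ} [∀ i, IsFiniteMeasure (V i)] [∀ i, NullSingletonClass (V i)]

theorem exists_proportional_listDivision {c : ℝ} (hc : 0 ≤ c) {A : List ι} (hA : A ≠ [])
    {a b : ℝ} (hab : a ≤ b) (hV : ∀ i ∈ A, A.length * c ≤ (V i).real (Ioc a b)) :
    ∃ L : List (ι × ℝ), (L.map Prod.fst).Perm A ∧ IsListDivision a b L ∧
      ∀ i, (L.map Prod.fst).count i * c ≤ (V i).real (listPiece a L i) := by
  obtain ⟨m, hm⟩ := Nat.exists_eq_succ_of_ne_zero (List.length_pos_iff.2 hA).ne'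
  induction m generalizing A a b with
  | zero =>
    obtain ⟨j, rfl⟩ := List.length_eq_one_iff.1 hm
    refine ⟨[(j, b)], by simp, isListDivision_singleton hab j, fun i => ?_⟩
    by_cases hji : j = i
    · subst hji
      simpa [listPiece] using hV j (by simp)
    · simp [listPiece, hji]
  | succ m ih =>
    have hcut : ∀ i ∈ A, ∃ x ∈ Icc a b, (V i).real (Ioc a x) = c := fun i hi =>
      exists_measureReal_Ioc_eq (V i) hab hc <| le_trans
        (le_mul_of_one_le_left hc (by rw [hm]; push_cast; linarith)) (hV i hi)
    choose! x hxab hxc using hcut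
    obtain ⟨j, hjA, hjmin⟩ :=
      A.toFinset.exists_min_image x ((List.toFinset_nonempty_iff A).2 hA)
    rw [List.mem_toFinset] at hjA
    have hlen : (A.erase j).length = m + 1 := by
      rw [List.length_erase_of_mem hjA, hm]; rfl
    have hV' : ∀ i ∈ A.erase j, (A.erase j).length * c ≤ (V i).real (Ioc (x j) b) := by
      intro i hi
      have hiA := List.mem_of_mem_erase hi
      have hsplit : (V i).real (Ioc a b) = (V i).real (Ioc a (x j)) + (V i).real (Ioc (x j) b) := by
        rw [← measureReal_union (Ioc_disjoint_Ioc_of_le le_rfl) measurableSet_Ioc,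
          Ioc_union_Ioc_eq_Ioc (hxab j hjA).1 (hxab j hjA).2]
      have hle : (V i).real (Ioc a (x j)) ≤ c :=
        hxc i hiA ▸ measureReal_mono (Ioc_subset_Ioc_right (hjmin i (List.mem_toFinset.2 hiA)))
      have hVi := hV i hiA
      rw [hm] at hVi
      rw [hlen]
      push_cast at hVi ⊢
      linarith
    obtain ⟨L, hperm, hL, hLV⟩ :=
      ih (List.ne_nil_of_length_eq_add_one hlen) (hxab j hjA).2 hV' hlen
    refine ⟨(j, x j) :: L, ?_, hL.cons (hxab j hjA).1 j, fun i => ?_⟩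
    · exact (hperm.cons j).trans (List.perm_cons_erase hjA).symm
    · rw [measureReal_listPiece_cons (V i) (hL.cons (hxab j hjA).1 j).1]
      have := hLV i
      by_cases hji : j = i
      · subst hji
        simp only [List.map_cons, List.count_cons_self, if_true, hxc j hjA]
        push_cast
        linarith
      · simpa [hji] using this

end ListDivision

theorem IsListDivision.exists_division {n : ℕ} {L : List (Fin n × ℝ)}
    (hL : IsListDivision 0 1 L) :
    ∃ k, k + 1 = L.length ∧ ∃ (x : Fin (k + 2) → ℝ) (owner : Fin (k + 1) → Fin n),
      IsDivision x ∧ ∀ i, listPiece 0 L i ⊆ piece x owner i := by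
  obtain ⟨k, hk⟩ : ∃ k, L.length = k + 1 :=
    Nat.exists_eq_succ_of_ne_zero fun h => by simp_all [IsListDivision]
  refine ⟨k, hk.symm, fun j => (0 :: L.map Prod.snd)[j.1]'(by simp; omega), fun j => L[j.1].1,
    ⟨fun j j' hjj' => ?_, rfl, ?_⟩, fun i y hy => ?_⟩
  · exact hL.1.sortedLE.monotone_get (show (⟨j, _⟩ : Fin _) ≤ ⟨j', _⟩ from hjj')
  · have := hL.2
    simp_all [List.getLast?_eq_getElem?]
  · obtain ⟨j, hj, hji, hyj⟩ := exists_mem_Ioc_of_mem_listPiece hy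
    exact mem_iUnion₂.2 ⟨⟨j, by omega⟩, hji, by simpa using hyj⟩

theorem almost_equal_entitlements_general (n D : ℕ) (hD : n ≤ D)
    (V : Fin n → Measure ℝ)
    (hprob : ∀ i, IsProbabilityMeasure (V i)) (hna : ∀ i, NoAtoms (V i))
    (hsupp : ∀ i, V i ((Icc (0:ℝ) 1)ᶜ) = 0)
    (il : Fin n)
    (t : Fin n → ℝ)
    (hto : ∀ i : Fin n, i ≠ il → t i = 1 / D)
    (htl : t il = ((D:ℝ) - n + 1) / D) :
    ∃ (k : ℕ), k ≤ 2 * n - 2 ∧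
      ∃ (x : Fin (k + 2) → ℝ) (owner : Fin (k + 1) → Fin n),
        IsDivision x ∧
        ∀ i, ENNReal.ofReal (t i) ≤ V i (piece x owner i) := by
  have := hprob
  have : ∀ i, NullSingletonClass (V i) := hna
  set A := List.finRange n ++ List.replicate (D - n) il
  have hA : A.length = D := by simp [A]; omega
  have ht : ∀ i, t i = A.count i * (1 / D) := by
    intro i
    by_cases hi : i = il
    · subst hi
      rw [htl, List.count_append, List.count_finRange, List.count_replicate_self, Nat.cast_add,
        Nat.cast_sub hD]
      ring
    · simp [A, hto i hi, List.count_replicate, Ne.symm hi]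
  have hsmall : A.countP (· ≠ il) = n - 1 := by
    have := (List.finRange n).length_eq_countP_add_countP (· == il)
    rw [← List.count, List.count_finRange, List.length_finRange] at this
    simp only [A, List.countP_append, List.countP_replicate, beq_iff_eq, decide_not, ne_eq,
      decide_true, Bool.not_true, Bool.false_eq_true, if_false, add_zero] at this ⊢
    omega
  have hone : ∀ i, (V i).real (Ioc 0 1) = 1 := by
    intro i
    rw [measureReal_congr Ioc_ae_eq_Icc, measureReal_def,
      (prob_compl_eq_zero_iff measurableSet_Icc).1 (hsupp i), ENNReal.toReal_one]
  obtain ⟨L, hperm, hL, hLV⟩ := exists_proportional_listDivision (V := V) (c := 1 / D)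
    (by positivity) (A := A) (List.ne_nil_of_mem (a := il) (by simp [A])) zero_le_one
    (fun i _ => by rw [hA, hone, mul_one_div]; exact div_self_le_one _)
  obtain ⟨k, hk, x, owner, hx, hpiece⟩ := hL.mergeRuns.exists_division
  refine ⟨k, ?_, x, owner, hx, fun i => ?_⟩
  · have := length_mergeRuns_le L il
    rw [hperm.countP_eq, hsmall] at this
    omega
  · calc ENNReal.ofReal (t i) ≤ ENNReal.ofReal ((V i).real (listPiece 0 L i)) :=
          ENNReal.ofReal_le_ofReal (by rw [ht, ← hperm.count_eq]; exact hLV i)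
      _ = V i (listPiece 0 L i) := ofReal_measureReal
      _ ≤ V i (piece x owner i) :=
          measure_mono ((listPiece_subset_listPiece_mergeRuns hL.1 i).trans (hpiece i))

/-- If `n - 1` of the entitlements equal `1/D` (for an integer `D ≥ n`), so the remaining
entitlement is `(D - n + 1)/D`, then a `t`-proportional allocation exists with at most
`2n - 2` cuts. -/
theorem almost_equal_entitlements (n D : ℕ) (hn : 2 ≤ n) (hD : n ≤ D)
    (V : Fin n → Measure ℝ)
    (hprob : ∀ i, IsProbabilityMeasure (V i)) (hna : ∀ i, NoAtoms (V i))
    (hsupp : ∀ i, V i ((Icc (0:ℝ) 1)ᶜ) = 0)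
    (il : Fin n) (hil : (il : ℕ) = n - 1)
    (t : Fin n → ℝ)
    (hto : ∀ i : Fin n, i ≠ il → t i = 1 / D)
    (htl : t il = ((D:ℝ) - n + 1) / D) :
    ∃ (k : ℕ), k ≤ 2 * n - 2 ∧
      ∃ (x : Fin (k + 2) → ℝ) (owner : Fin (k + 1) → Fin n),
        IsDivision x ∧
        ∀ i, ENNReal.ofReal (t i) ≤ V i (piece x owner i) :=
  almost_equal_entitlements_general n D hD V hprob hna hsupp il t hto htl
end
end
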